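/- In the homogeneous model G/P with G = PGL(n+2,ℝ) (n ≥ 1) and P the parabolic of classes of block upper triangular matrices (blocks 1, n, 1), an element g ∈ P induces -id on g^{-1}/p ≅ g_{-1} under the truncated adjoint action if and only if g is the class of a matrix g₀ exp(Z₁) exp(Z₂) with g₀ = diag(-1, E_n, -1), Z₁ ∈ g_1, Z₂ ∈ g_2 arbitrary. In particular there are infinitely many such elements (a family parametrized by g_1 ⊕ g_2 ≅ ℝ^{2n+1}). -/

import Mathlib

abbrev BlockIdx (n : ℕ) := Unit ⊕ Fin n ⊕ Unit

def blockWeight (n : ℕ) : BlockIdx n → ℤ :=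
  Sum.elim (fun _ => 1) (Sum.elim (fun _ => 0) (fun _ => -1))

/-- The grade-`d` piece of the contact grading (block sizes 1, n, 1). -/
def slGrade (n : ℕ) (d : ℤ) : Submodule ℝ (Matrix (BlockIdx n) (BlockIdx n) ℝ) where
  carrier := {X | ∀ i j, blockWeight n i - blockWeight n j ≠ d → X i j = 0}
  zero_mem' := fun _ _ _ => rfl
  add_mem' := by
    intro a b ha hb i j h
    simp [Matrix.add_apply, ha i j h, hb i j h]
  smul_mem' := by
    intro c a ha i j h
    simp [Matrix.smul_apply, ha i j h]

/-- The parabolic subalgebra `p = g_0 ⊕ g_1 ⊕ g_2`: block upper triangular matrices. -/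
def pSub (n : ℕ) : Submodule ℝ (Matrix (BlockIdx n) (BlockIdx n) ℝ) where
  carrier := {X | ∀ i j, blockWeight n i < blockWeight n j → X i j = 0}
  zero_mem' := fun _ _ _ => rfl
  add_mem' := by
    intro a b ha hb i j h
    simp [Matrix.add_apply, ha i j h, hb i j h]
  smul_mem' := by
    intro c a ha i j h
    simp [Matrix.smul_apply, ha i j h]

/-- The matrix `g₀ = diag(-1, Eₙ, -1)`. -/
noncomputable def gZero (n : ℕ) : Matrix (BlockIdx n) (BlockIdx n) ℝ :=
  Matrix.diagonal (Sum.elim (fun _ => -1) (Sum.elim (fun _ => 1) (fun _ => -1)))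

/-- The exponential of an element of `p_+ = g_1 ⊕ g_2`; since such elements cube to
zero, the exponential series is `1 + Z + ½Z²`. -/
noncomputable def pExp (n : ℕ) (Z : Matrix (BlockIdx n) (BlockIdx n) ℝ) :
    Matrix (BlockIdx n) (BlockIdx n) ℝ :=
  1 + Z + (2 : ℝ)⁻¹ • (Z * Z)

namespace Stmt17Aux

variable {n : ℕ}

lemma mem_slGrade {d : ℤ} {A : Matrix (BlockIdx n) (BlockIdx n) ℝ} (hA : A ∈ slGrade n d)
    {i j : BlockIdx n} (h : blockWeight n i - blockWeight n j ≠ d) : A i j = 0 := hA i j h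

lemma weight_le (i : BlockIdx n) : -1 ≤ blockWeight n i ∧ blockWeight n i ≤ 1 := by
  rcases i with _ | k | _ <;> simp [blockWeight]

lemma grade_mul {A B : Matrix (BlockIdx n) (BlockIdx n) ℝ} {d₁ d₂ : ℤ}
    (hA : A ∈ slGrade n d₁) (hB : B ∈ slGrade n d₂) : A * B ∈ slGrade n (d₁ + d₂) := by
  intro i j h
  rw [Matrix.mul_apply]
  apply Finset.sum_eq_zero
  intro p _
  by_cases h1 : blockWeight n i - blockWeight n p = d₁
  · rw [mem_slGrade hB (by omega), mul_zero]
  · rw [mem_slGrade hA h1, zero_mul]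

lemma grade_zero_big {A : Matrix (BlockIdx n) (BlockIdx n) ℝ} {d : ℤ}
    (hA : A ∈ slGrade n d) (hd : 2 < d) : A = 0 := by
  ext i j
  have h1 := weight_le i
  have h2 := weight_le j
  exact mem_slGrade hA (by omega)

lemma grade_mul_big {A B : Matrix (BlockIdx n) (BlockIdx n) ℝ} {d₁ d₂ : ℤ}
    (hA : A ∈ slGrade n d₁) (hB : B ∈ slGrade n d₂) (h : 2 < d₁ + d₂) : A * B = 0 :=
  grade_zero_big (grade_mul hA hB) h

lemma pSub_mul {A B : Matrix (BlockIdx n) (BlockIdx n) ℝ}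
    (hA : A ∈ pSub n) (hB : B ∈ pSub n) : A * B ∈ pSub n := by
  intro i j h
  rw [Matrix.mul_apply]
  apply Finset.sum_eq_zero
  intro p _
  by_cases h1 : blockWeight n i < blockWeight n p
  · rw [hA i p h1, zero_mul]
  · rw [hB p j (by omega), mul_zero]

lemma grade_le_pSub {d : ℤ} (hd : 0 ≤ d) {A : Matrix (BlockIdx n) (BlockIdx n) ℝ}
    (hA : A ∈ slGrade n d) : A ∈ pSub n := by
  intro i j h
  exact mem_slGrade hA (by omega)

lemma gZero_mem_pSub : gZero n ∈ pSub n := by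
  intro i j h
  exact Matrix.diagonal_apply_ne _ (by rintro rfl; exact lt_irrefl _ h)

lemma gZero_sq : gZero n * gZero n = 1 := by
  rw [gZero, Matrix.diagonal_mul_diagonal]
  ext i j
  rcases eq_or_ne i j with rfl | hne
  · rcases i with _ | k | _ <;> simp [Matrix.one_apply]
  · simp [Matrix.diagonal_apply_ne _ hne, Matrix.one_apply_ne hne]

lemma gZero_conj_neg {X : Matrix (BlockIdx n) (BlockIdx n) ℝ} (hX : X ∈ slGrade n (-1)) :
    gZero n * X * gZero n = -X := by
  have hz : ∀ i j, blockWeight n i - blockWeight n j ≠ -1 → X i j = 0 := hX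
  ext i j
  rw [gZero, Matrix.mul_diagonal, Matrix.diagonal_mul]
  rcases i with v | k | v <;> rcases j with w | l | w <;>
    simp only [Sum.elim_inl, Sum.elim_inr, Matrix.neg_apply]
  · rw [hz (Sum.inl v) (Sum.inl w) (by norm_num [blockWeight])]; ring
  · ring
  · rw [hz (Sum.inl v) (Sum.inr (Sum.inr w)) (by norm_num [blockWeight])]; ring
  · ring
  · rw [hz (Sum.inr (Sum.inl k)) (Sum.inr (Sum.inl l)) (by norm_num [blockWeight])]; ring
  · ring
  · rw [hz (Sum.inr (Sum.inr v)) (Sum.inl w) (by norm_num [blockWeight])]; ring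
  · ring
  · rw [hz (Sum.inr (Sum.inr v)) (Sum.inr (Sum.inr w)) (by norm_num [blockWeight])]; ring

lemma pExp_mul_pExp {Z₁ Z₂ : Matrix (BlockIdx n) (BlockIdx n) ℝ}
    (h1 : Z₁ ∈ slGrade n 1) (h2 : Z₂ ∈ slGrade n 2) :
    pExp n Z₁ * pExp n Z₂ = 1 + (Z₁ + Z₂ + (2:ℝ)⁻¹ • (Z₁ * Z₁)) := by
  have z22 : Z₂ * Z₂ = 0 := grade_mul_big h2 h2 (by norm_num)
  have z12 : Z₁ * Z₂ = 0 := grade_mul_big h1 h2 (by norm_num)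
  have s2 : Z₁ * Z₁ * Z₂ = 0 := grade_mul_big (grade_mul h1 h1) h2 (by norm_num)
  rw [pExp, pExp, z22, smul_zero, add_zero]
  simp only [mul_add, add_mul, one_mul, mul_one, smul_mul_assoc, z12, s2, smul_zero,
    add_zero, zero_add]
  abel

lemma pExp_mul_inv {Z₁ Z₂ : Matrix (BlockIdx n) (BlockIdx n) ℝ}
    (h1 : Z₁ ∈ slGrade n 1) (h2 : Z₂ ∈ slGrade n 2) :
    (pExp n Z₁ * pExp n Z₂) * (pExp n (-Z₂) * pExp n (-Z₁)) = 1 := by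
  have h1' : -Z₁ ∈ slGrade n 1 := neg_mem h1
  have h2' : -Z₂ ∈ slGrade n 2 := neg_mem h2
  have z22 : Z₂ * Z₂ = 0 := grade_mul_big h2 h2 (by norm_num)
  have z12 : Z₁ * Z₂ = 0 := grade_mul_big h1 h2 (by norm_num)
  have z21 : Z₂ * Z₁ = 0 := grade_mul_big h2 h1 (by norm_num)
  have z1S : Z₁ * (Z₁ * Z₁) = 0 := by
    rw [← mul_assoc]; exact grade_mul_big (grade_mul h1 h1) h1 (by norm_num)
  have Sz1 : (Z₁ * Z₁) * Z₁ = 0 := grade_mul_big (grade_mul h1 h1) h1 (by norm_num)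
  have z2S : Z₂ * (Z₁ * Z₁) = 0 := by
    rw [← mul_assoc]
    calc Z₂ * Z₁ * Z₁ = 0 * Z₁ := by rw [z21]
    _ = 0 := zero_mul _
  have Sz2 : (Z₁ * Z₁) * Z₂ = 0 := grade_mul_big (grade_mul h1 h1) h2 (by norm_num)
  have SS : (Z₁ * Z₁) * (Z₁ * Z₁) = 0 := by
    rw [← mul_assoc, Sz1, zero_mul]
  rw [pExp_mul_pExp h1 h2]
  have e2 : pExp n (-Z₂) * pExp n (-Z₁) = 1 + (-Z₂ + -Z₁ + (2:ℝ)⁻¹ • (Z₁ * Z₁)) := by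
    have z22' : (-Z₂) * (-Z₂) = 0 := by rw [neg_mul_neg, z22]
    have z21' : (-Z₂) * (-Z₁) = 0 := by rw [neg_mul_neg, z21]
    have z2S' : (-Z₂) * (Z₁ * Z₁) = 0 := by rw [neg_mul, z2S, neg_zero]
    rw [pExp, pExp, z22', smul_zero, add_zero, neg_mul_neg]
    simp only [mul_add, add_mul, one_mul, mul_one, mul_smul_comm, z21', z2S', smul_zero,
      add_zero, zero_add]
    abel
  rw [e2]
  have expand : ∀ N N' : Matrix (BlockIdx n) (BlockIdx n) ℝ,
      (1 + N) * (1 + N') = 1 + (N + N' + N * N') := by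
    intro N N'
    noncomm_ring
  rw [expand]
  have hNN : (Z₁ + Z₂ + (2:ℝ)⁻¹ • (Z₁ * Z₁)) * (-Z₂ + -Z₁ + (2:ℝ)⁻¹ • (Z₁ * Z₁))
      = -(Z₁ * Z₁) := by
    simp only [mul_add, add_mul, mul_neg, neg_mul, smul_mul_assoc, mul_smul_comm,
      z22, z12, z21, z1S, Sz1, z2S, Sz2, SS, smul_zero, neg_zero, add_zero, zero_add,
      smul_smul]
  rw [hNN]
  have : Z₁ + Z₂ + (2:ℝ)⁻¹ • (Z₁ * Z₁) + (-Z₂ + -Z₁ + (2:ℝ)⁻¹ • (Z₁ * Z₁)) + -(Z₁ * Z₁)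
      = 0 := by module
  rw [this, add_zero]

lemma pExp_neg_mul {Z₁ Z₂ : Matrix (BlockIdx n) (BlockIdx n) ℝ}
    (h1 : Z₁ ∈ slGrade n 1) (h2 : Z₂ ∈ slGrade n 2) :
    pExp n (-Z₂) * pExp n (-Z₁) = 1 + (-Z₂ + -Z₁ + (2:ℝ)⁻¹ • (Z₁ * Z₁)) := by
  have z22 : Z₂ * Z₂ = 0 := grade_mul_big h2 h2 (by norm_num)
  have z21 : Z₂ * Z₁ = 0 := grade_mul_big h2 h1 (by norm_num)
  have z2S : Z₂ * (Z₁ * Z₁) = 0 := by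
    rw [← mul_assoc, z21, zero_mul]
  have z22' : (-Z₂) * (-Z₂) = 0 := by rw [neg_mul_neg, z22]
  have z21' : (-Z₂) * (-Z₁) = 0 := by rw [neg_mul_neg, z21]
  have z2S' : (-Z₂) * (Z₁ * Z₁) = 0 := by rw [neg_mul, z2S, neg_zero]
  rw [pExp, pExp, z22', smul_zero, add_zero, neg_mul_neg]
  simp only [mul_add, add_mul, one_mul, mul_one, mul_smul_comm, z21', z2S', smul_zero,
    add_zero, zero_add]
  abel

/-- index of the top block -/
abbrev iT (n : ℕ) : BlockIdx n := Sum.inl ()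
/-- index in the middle block -/
abbrev iM (n : ℕ) (k : Fin n) : BlockIdx n := Sum.inr (Sum.inl k)
/-- index of the bottom block -/
abbrev iB (n : ℕ) : BlockIdx n := Sum.inr (Sum.inr ())

@[simp] lemma w_iT : blockWeight n (iT n) = 1 := rfl
@[simp] lemma w_iM (k : Fin n) : blockWeight n (iM n k) = 0 := rfl
@[simp] lemma w_iB : blockWeight n (iB n) = -1 := rfl

lemma mul3 (A B : Matrix (BlockIdx n) (BlockIdx n) ℝ) (i j : BlockIdx n) :
    (A * B) i j = A i (iT n) * B (iT n) j
      + (∑ k : Fin n, A i (iM n k) * B (iM n k) j)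
      + A i (iB n) * B (iB n) j := by
  rw [Matrix.mul_apply]
  simp only [Fintype.sum_sum_type, Finset.univ_unique, Finset.sum_singleton]
  ring

lemma conj_mem {Z₁ Z₂ X : Matrix (BlockIdx n) (BlockIdx n) ℝ}
    (h1 : Z₁ ∈ slGrade n 1) (h2 : Z₂ ∈ slGrade n 2) (hX : X ∈ slGrade n (-1)) :
    (gZero n * (pExp n Z₁ * pExp n Z₂)) * X * ((pExp n (-Z₂) * pExp n (-Z₁)) * gZero n) + X
      ∈ pSub n := by
  rw [pExp_mul_pExp h1 h2, pExp_neg_mul h1 h2]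
  set S := Z₁ * Z₁ with hSdef
  have hS : S ∈ slGrade n 2 := grade_mul h1 h1
  set N : Matrix (BlockIdx n) (BlockIdx n) ℝ := Z₁ + Z₂ + (2:ℝ)⁻¹ • S with hNdef
  set N' : Matrix (BlockIdx n) (BlockIdx n) ℝ := -Z₂ + -Z₁ + (2:ℝ)⁻¹ • S with hN'def
  have hN'p : N' ∈ pSub n :=
    add_mem (add_mem (grade_le_pSub (by norm_num) (neg_mem h2))
      (grade_le_pSub (by norm_num) (neg_mem h1)))
      (Submodule.smul_mem _ _ (grade_le_pSub (by norm_num) hS))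
  have hNX : N * X ∈ pSub n := by
    have e : N * X = Z₁ * X + Z₂ * X + (2:ℝ)⁻¹ • (S * X) := by
      rw [hNdef, add_mul, add_mul, smul_mul_assoc]
    rw [e]
    exact add_mem (add_mem (grade_le_pSub (by norm_num) (grade_mul h1 hX))
      (grade_le_pSub (by norm_num) (grade_mul h2 hX)))
      (Submodule.smul_mem _ _ (grade_le_pSub (by norm_num) (grade_mul hS hX)))
  have hXN' : X * N' ∈ pSub n := by
    have e : X * N' = X * (-Z₂) + X * (-Z₁) + (2:ℝ)⁻¹ • (X * S) := by
      rw [hN'def, mul_add, mul_add, mul_smul_comm]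
    rw [e]
    exact add_mem (add_mem (grade_le_pSub (by norm_num) (grade_mul hX (neg_mem h2)))
      (grade_le_pSub (by norm_num) (grade_mul hX (neg_mem h1))))
      (Submodule.smul_mem _ _ (grade_le_pSub (by norm_num) (grade_mul hX hS)))
  have key : (gZero n * (1 + N)) * X * ((1 + N') * gZero n) + X
      = (gZero n * X * gZero n + X)
        + gZero n * (N * X + X * N' + N * X * N') * gZero n := by
    noncomm_ring
  rw [key, gZero_conj_neg hX, neg_add_cancel, zero_add]
  exact pSub_mul (pSub_mul gZero_mem_pSub
    (add_mem (add_mem hNX hXN') (pSub_mul hNX hN'p))) gZero_mem_pSub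

lemma triple (A B : Matrix (BlockIdx n) (BlockIdx n) ℝ) (p q i j : BlockIdx n) :
    (A * Matrix.single p q (1:ℝ) * B) i j = A i p * B q j := by
  rw [mul_assoc, Matrix.mul_apply, Finset.sum_eq_single p]
  · rw [Matrix.single_mul_apply_same, one_mul]
  · intro r _ hr
    rw [Matrix.single_mul_apply_of_ne 1 p q r j hr B, mul_zero]
  · intro hp; exact absurd (Finset.mem_univ p) hp

lemma stdBasis_mem_grade (p q : BlockIdx n) (d : ℤ) (h : blockWeight n p - blockWeight n q = d) :
    Matrix.single p q (1:ℝ) ∈ slGrade n d := by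
  intro i j hw
  exact Matrix.single_apply_of_ne (i := p) (j := q) (c := (1:ℝ)) (i' := i) (j' := j) (h := by rintro ⟨rfl, rfl⟩; exact hw h)

end Stmt17Aux

open Stmt17Aux

/-- In the homogeneous model `G/P`, `G = PGL(n+2,ℝ)`, `P` the classes
of block upper triangular matrices (blocks 1, n, 1), an element `g ∈ P` induces
`-id` on `g^{-1}/p ≅ g_{-1}` under the truncated adjoint action iff `g` is the
class of (i.e. a nonzero scalar multiple of) a matrix `g₀ · exp(Z₁) · exp(Z₂)` with
`g₀ = diag(-1, Eₙ, -1)`, `Z₁ ∈ g_1`, `Z₂ ∈ g_2` arbitrary.  In particular, there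
are infinitely many such elements, parametrized by `g_1 ⊕ g_2 ≅ ℝ^{2n+1}`. -/
theorem stmt17 (n : ℕ) (hn : 1 ≤ n) :
    (∀ g : (Matrix (BlockIdx n) (BlockIdx n) ℝ)ˣ,
      (∀ i j, blockWeight n i < blockWeight n j → (g : Matrix (BlockIdx n) (BlockIdx n) ℝ) i j = 0) →
      ((∀ X ∈ slGrade n (-1),
          (g : Matrix (BlockIdx n) (BlockIdx n) ℝ) * X * ((g⁻¹ : _ˣ) : Matrix (BlockIdx n) (BlockIdx n) ℝ) + X ∈ pSub n) ↔
        ∃ c : ℝ, c ≠ 0 ∧ ∃ Z₁ ∈ slGrade n 1, ∃ Z₂ ∈ slGrade n 2,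
          (g : Matrix (BlockIdx n) (BlockIdx n) ℝ) = c • (gZero n * pExp n Z₁ * pExp n Z₂))) ∧
    Set.Infinite {A : Matrix (BlockIdx n) (BlockIdx n) ℝ |
      ∃ Z₁ ∈ slGrade n 1, ∃ Z₂ ∈ slGrade n 2, A = gZero n * pExp n Z₁ * pExp n Z₂} := by
  constructor
  · intro g hg
    constructor
    · intro hAll
      set G : Matrix (BlockIdx n) (BlockIdx n) ℝ := ↑g with hGdef
      set H : Matrix (BlockIdx n) (BlockIdx n) ℝ := ↑g⁻¹ with hHdef
      have hGH : G * H = 1 := by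
        rw [hGdef, hHdef, ← Units.val_mul, mul_inv_cancel, Units.val_one]
      have hHG : H * G = 1 := by
        rw [hGdef, hHdef, ← Units.val_mul, inv_mul_cancel, Units.val_one]
      have hg1 : ∀ k, G (iM n k) (iT n) = 0 := fun k => hg _ _ (by simp)
      have hg2 : G (iB n) (iT n) = 0 := hg _ _ (by simp)
      have hg3 : ∀ k, G (iB n) (iM n k) = 0 := fun k => hg _ _ (by simp)
      have htt : H (iT n) (iT n) * G (iT n) (iT n) = 1 := by
        have hq : (H * G) (iT n) (iT n) = 1 := by rw [hHG, Matrix.one_apply_eq]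
        rw [mul3] at hq
        simpa [hg1, hg2] using hq
      have ha : G (iT n) (iT n) ≠ 0 := right_ne_zero_of_mul_eq_one htt
      have Gmm : ∀ k l, G (iM n k) (iM n l) = if l = k then -(G (iT n) (iT n)) else 0 := by
        intro k l
        have hE : Matrix.single (iM n l) (iT n) (1:ℝ) ∈ slGrade n (-1) :=
          stdBasis_mem_grade _ _ _ (by simp)
        have hm := hAll _ hE (iM n k) (iT n) (by simp)
        rw [Matrix.add_apply, triple] at hm
        have hb : Matrix.single (iM n l) (iT n) (1:ℝ) (iM n k) (iT n)
            = if l = k then (1:ℝ) else 0 := by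
          rcases eq_or_ne l k with rfl | hlk
          · simp
          · rw [Matrix.single_apply_of_row_ne (by simp [hlk]), if_neg hlk]
        rw [hb] at hm
        have he : G (iM n k) (iM n l)
            = (G (iM n k) (iM n l) * H (iT n) (iT n)) * G (iT n) (iT n) := by
          rw [mul_assoc, htt, mul_one]
        rw [he, eq_neg_of_add_eq_zero_left hm]
        split_ifs <;> ring
      have hbb : G (iB n) (iB n) * H (iB n) (iB n) = 1 := by
        have hq : (G * H) (iB n) (iB n) = 1 := by rw [hGH, Matrix.one_apply_eq]
        rw [mul3] at hq
        simpa [hg2, hg3] using hq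
      have hbne : G (iB n) (iB n) ≠ 0 := left_ne_zero_of_mul_eq_one hbb
      have hHbm : ∀ l, H (iB n) (iM n l) = 0 := by
        intro l
        have hq : (G * H) (iB n) (iM n l) = 0 := by
          rw [hGH]; exact Matrix.one_apply_ne (by simp)
        rw [mul3] at hq
        simp only [hg2, hg3, zero_mul, Finset.sum_const_zero, add_zero, zero_add] at hq
        exact (mul_eq_zero.mp hq).resolve_left hbne
      have hHmm : -(G (iT n) (iT n)) * H (iM n ⟨0, hn⟩) (iM n ⟨0, hn⟩) = 1 := by
        have hq : (G * H) (iM n ⟨0, hn⟩) (iM n ⟨0, hn⟩) = 1 := by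
          rw [hGH, Matrix.one_apply_eq]
        rw [mul3] at hq
        simpa [hg1, hHbm, Gmm, ite_mul, Finset.sum_ite_eq'] using hq
      have hGbb : G (iB n) (iB n) = G (iT n) (iT n) := by
        have hE : Matrix.single (iB n) (iM n ⟨0, hn⟩) (1:ℝ) ∈ slGrade n (-1) :=
          stdBasis_mem_grade _ _ _ (by simp)
        have hm := hAll _ hE (iB n) (iM n ⟨0, hn⟩) (by simp)
        rw [Matrix.add_apply, triple, Matrix.single_apply_same] at hm
        have hH0 : H (iM n ⟨0, hn⟩) (iM n ⟨0, hn⟩) ≠ 0 := by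
          intro h0
          rw [h0, mul_zero] at hHmm
          exact zero_ne_one hHmm
        apply mul_right_cancel₀ hH0
        rw [neg_mul] at hHmm
        nlinarith [hm, hHmm]
      -- construct the data
      refine ⟨-(G (iT n) (iT n)), neg_ne_zero.mpr ha,
        Matrix.of (fun i j =>
          match i, j with
          | Sum.inl _, Sum.inr (Sum.inl k) => G (iT n) (iM n k) / G (iT n) (iT n)
          | Sum.inr (Sum.inl k), Sum.inr (Sum.inr _) => -(G (iM n k) (iB n)) / G (iT n) (iT n)
          | _, _ => 0), ?_,
        Matrix.of (fun i j =>
          match i, j with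
          | Sum.inl _, Sum.inr (Sum.inr _) =>
              G (iT n) (iB n) / G (iT n) (iT n) - (2:ℝ)⁻¹ *
                (∑ k, (G (iT n) (iM n k) / G (iT n) (iT n)) *
                  (-(G (iM n k) (iB n)) / G (iT n) (iT n)))
          | _, _ => 0), ?_, ?_⟩
      · intro i j hw
        rcases i with ⟨⟩ | k | ⟨⟩ <;> rcases j with ⟨⟩ | l | ⟨⟩ <;>
          first
            | rfl
            | (exfalso; simp [blockWeight] at hw)
      · intro i j hw
        rcases i with ⟨⟩ | k | ⟨⟩ <;> rcases j with ⟨⟩ | l | ⟨⟩ <;>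
          first
            | rfl
            | (exfalso; simp [blockWeight] at hw)
      · rw [mul_assoc, pExp_mul_pExp (by
            intro i j hw
            rcases i with ⟨⟩ | k | ⟨⟩ <;> rcases j with ⟨⟩ | l | ⟨⟩ <;>
              first
                | rfl
                | (exfalso; simp [blockWeight] at hw)) (by
            intro i j hw
            rcases i with ⟨⟩ | k | ⟨⟩ <;> rcases j with ⟨⟩ | l | ⟨⟩ <;>
              first
                | rfl
                | (exfalso; simp [blockWeight] at hw))]
        have euT : ∀ u : Unit, (Sum.inl u : BlockIdx n) = iT n := fun u => rfl
        have euB : ∀ u : Unit, (Sum.inr (Sum.inr u) : BlockIdx n) = iB n := fun u => rfl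
        ext i j
        rcases i with ⟨⟩ | k | ⟨⟩ <;> rcases j with ⟨⟩ | l | ⟨⟩ <;>
          simp only [Matrix.smul_apply, gZero, Matrix.diagonal_mul, Sum.elim_inl, Sum.elim_inr,
            Matrix.add_apply, Matrix.one_apply, mul3, Matrix.of_apply, smul_eq_mul,
            Matrix.zero_apply, euT, euB, mul_zero, zero_mul, add_zero, zero_add,
            Finset.sum_const_zero, if_true, reduceCtorEq, if_false, Sum.inr.injEq,
            Sum.inl.injEq]
        · ring
        · field_simp
        · field_simp
          ring
        · simp [hg1]
        · rw [Gmm]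
          rcases eq_or_ne k l with rfl | hkl
          · simp
          · simp [hkl, Ne.symm hkl]
        · field_simp
        · simp [hg2]
        · simp [hg3]
        · rw [hGbb]
          simp
    · rintro ⟨c, hc, Z₁, h1, Z₂, h2, hval⟩ X hX
      have huu := pExp_mul_inv h1 h2
      set B : Matrix (BlockIdx n) (BlockIdx n) ℝ :=
        c⁻¹ • ((pExp n (-Z₂) * pExp n (-Z₁)) * gZero n) with hBdef
      have hgB : (g : Matrix (BlockIdx n) (BlockIdx n) ℝ) * B = 1 := by
        rw [hval, hBdef]
        rw [smul_mul_assoc, mul_smul_comm, smul_smul, mul_inv_cancel₀ hc, one_smul]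
        calc gZero n * pExp n Z₁ * pExp n Z₂ * (pExp n (-Z₂) * pExp n (-Z₁) * gZero n)
            = gZero n * ((pExp n Z₁ * pExp n Z₂) * (pExp n (-Z₂) * pExp n (-Z₁))) * gZero n := by
              noncomm_ring
          _ = 1 := by rw [huu, mul_one, gZero_sq]
      have hinv : ((g⁻¹ : _ˣ) : Matrix (BlockIdx n) (BlockIdx n) ℝ) = B := by
        calc ((g⁻¹ : _ˣ) : Matrix (BlockIdx n) (BlockIdx n) ℝ)
            = ((g⁻¹ : _ˣ) : Matrix (BlockIdx n) (BlockIdx n) ℝ) * ((g : Matrix (BlockIdx n) (BlockIdx n) ℝ) * B) := by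
              rw [hgB, mul_one]
          _ = (((g⁻¹ : _ˣ) : Matrix (BlockIdx n) (BlockIdx n) ℝ) * (g : Matrix (BlockIdx n) (BlockIdx n) ℝ)) * B := by
              rw [mul_assoc]
          _ = B := by rw [← Units.val_mul, inv_mul_cancel, Units.val_one, one_mul]
      rw [hval, hinv, hBdef]
      have e : (c • (gZero n * pExp n Z₁ * pExp n Z₂)) * X *
            (c⁻¹ • (pExp n (-Z₂) * pExp n (-Z₁) * gZero n))
          = (gZero n * (pExp n Z₁ * pExp n Z₂)) * X * ((pExp n (-Z₂) * pExp n (-Z₁)) * gZero n) := by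
        simp only [smul_mul_assoc, mul_smul_comm, smul_smul]
        rw [inv_mul_cancel₀ hc, one_smul, mul_assoc (gZero n)]
      rw [e]
      exact conj_mem h1 h2 hX
  · apply Set.infinite_of_injective_forall_mem
      (f := fun s : ℝ => gZero n * pExp n 0 * pExp n (s • Matrix.single (iT n) (iB n) (1:ℝ)))
    · intro s1 s2 h
      have hP : ∀ s : ℝ, (gZero n * pExp n 0 *
          pExp n (s • Matrix.single (iT n) (iB n) (1:ℝ))) (iT n) (iB n) = -s := by
        intro s
        have hne : (iB n) ≠ (iT n) := by simp
        have hE2 : (s • Matrix.single (iT n) (iB n) (1:ℝ)) *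
            (s • Matrix.single (iT n) (iB n) (1:ℝ)) = 0 := by
          rw [smul_mul_assoc, mul_smul_comm, Matrix.single_mul_single_of_ne (h := hne),
            smul_zero, smul_zero]
        have h0 : pExp n (0 : Matrix (BlockIdx n) (BlockIdx n) ℝ) = 1 := by
          simp [pExp]
        rw [h0, mul_one, pExp, hE2, smul_zero, add_zero]
        rw [gZero, Matrix.diagonal_mul, Matrix.add_apply, Matrix.one_apply_ne (by simp),
          Matrix.smul_apply, Matrix.single_apply_same]
        simp
      have h2 : (-s1 : ℝ) = -s2 := by
        rw [← hP s1, ← hP s2]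
        exact congrFun (congrFun h (iT n)) (iB n)
      linarith
    · intro s
      refine ⟨0, zero_mem _, s • Matrix.single (iT n) (iB n) (1:ℝ),
        Submodule.smul_mem _ _ (stdBasis_mem_grade _ _ _ (by simp)), rfl⟩
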